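/- arXiv:2205.12109 — 3 statements merged into one kernel-verified Lean document; each statement's English description precedes it below -/
import Mathlib

section
/- Centralized and federated Gram-Schmidt orthogonalization are equivalent: let v : Fin k → EuclideanSpace ℝ N be a linearly independent family of vectors indexed by the sigma type N = (s : Fin S) × Fin (n s), and suppose the families ũ_i^s : EuclideanSpace ℝ (Fin (n s)) (for i : Fin k, s : Fin S) satisfy the federated recursion ũ_i^s = v_i^s − Σ_{j < i} r_{ij} • ũ_j^s, where the aggregated residuals are r_{ij} = (Σ_t ⟨ũ_j^t, v_i^t⟩) / (Σ_t ⟨ũ_j^t, ũ_j^t⟩). Then for every i and s, ũ_i^s equals the local block (gramSchmidt ℝ v i)^s of the centrally computed Gram-Schmidt vector. -/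
open scoped RealInnerProductSpace

instance finChainWellFoundedLT (k : ℕ) :
    @IsWellFounded (Fin k) (fun a b => @LT.lt _ (@Preorder.toLT _ (@PartialOrder.toPreorder _
      (@SemilatticeInf.toPartialOrder _ (@Lattice.toSemilatticeInf _
        (@DistribLattice.toLattice _ (@instDistribLatticeOfLinearOrder _
          Fin.instLinearOrder)))))) a b) :=
  inferInstanceAs (WellFoundedLT (Fin k))

/-- The local block `u^s = u ∘ Sigma.mk s` of a vertically partitioned vector `u` at site `s`. -/
def localBlock {S : ℕ} {n : Fin S → ℕ}
    (u : EuclideanSpace ℝ ((s : Fin S) × Fin (n s))) (s : Fin S) :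
    EuclideanSpace ℝ (Fin (n s)) :=
  WithLp.toLp 2 (fun j => u (Sigma.mk s j))

/-! Gluing the local blocks `ũ_i^s` of each `i` into one global vector, the aggregated residuals
become the centralized Gram-Schmidt coefficients, because the inner product on the sigma type
splits as a sum of local inner products over the sites. The glued family therefore satisfies the
Gram-Schmidt recursion, and that recursion determines its solution uniquely. -/

open Finset InnerProductSpace

section RecursionCharacterization

variable {𝕜 E ι : Type*} [RCLike 𝕜] [NormedAddCommGroup E] [InnerProductSpace 𝕜 E]
  [LinearOrder ι] [LocallyFiniteOrderBot ι] [WellFoundedLT ι]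

theorem eq_gramSchmidt_of_forall_eq_sub_sum {f g : ι → E}
    (hg : ∀ i, g i = f i - ∑ j ∈ Iio i, (⟪g j, f i⟫_𝕜 / ⟪g j, g j⟫_𝕜) • g j) :
    g = gramSchmidt 𝕜 f := by
  funext i
  induction i using WellFoundedLT.induction with
  | _ i ih =>
    rw [hg i, gramSchmidt_def]
    congr 1
    refine sum_congr rfl fun j hj => ?_
    rw [ih j (mem_Iio.mp hj), Submodule.starProjection_singleton, inner_self_eq_norm_sq_to_K]
    norm_cast

end RecursionCharacterization

section LocalBlocks

variable {S : ℕ} {n : Fin S → ℕ}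

def ofLocalBlocks (w : (s : Fin S) → EuclideanSpace ℝ (Fin (n s))) :
    EuclideanSpace ℝ ((s : Fin S) × Fin (n s)) :=
  WithLp.toLp 2 fun p => w p.1 p.2

@[simp]
theorem localBlock_ofLocalBlocks (w : (s : Fin S) → EuclideanSpace ℝ (Fin (n s))) (s : Fin S) :
    localBlock (ofLocalBlocks w) s = w s :=
  rfl

theorem inner_eq_sum_inner_localBlock (a b : EuclideanSpace ℝ ((s : Fin S) × Fin (n s))) :
    ⟪a, b⟫ = ∑ t, ⟪localBlock a t, localBlock b t⟫ := by
  simp only [PiLp.inner_apply, localBlock, ← univ_sigma_univ, sum_sigma]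

end LocalBlocks

theorem federated_gramSchmidt_eq_centralized_general (S k : ℕ) (n : Fin S → ℕ)
    (v : Fin k → EuclideanSpace ℝ ((s : Fin S) × Fin (n s)))
    (u : Fin k → (s : Fin S) → EuclideanSpace ℝ (Fin (n s)))
    (hrec : ∀ (i : Fin k) (s : Fin S), u i s =
      localBlock (v i) s -
        ∑ j ∈ Finset.Iio i,
          ((∑ t : Fin S, ⟪u j t, localBlock (v i) t⟫) /
            (∑ t : Fin S, ⟪u j t, u j t⟫)) • u j s) :
    ∀ (i : Fin k) (s : Fin S), u i s = localBlock (InnerProductSpace.gramSchmidt ℝ v i) s := by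
  have hglobal : (fun i => ofLocalBlocks (u i)) = gramSchmidt ℝ v := by
    refine eq_gramSchmidt_of_forall_eq_sub_sum fun i => ?_
    simp only [inner_eq_sum_inner_localBlock, localBlock_ofLocalBlocks]
    ext ⟨s, x⟩
    simpa [ofLocalBlocks, localBlock] using congrArg (· x) (hrec i s)
  intro i s
  rw [← hglobal, localBlock_ofLocalBlocks]

/-- Centralized and federated Gram-Schmidt orthogonalization are equivalent: if the local
families `ũ i s` satisfy the federated recursion `ũ_i^s = v_i^s − Σ_{j<i} r_{ij} • ũ_j^s`
with aggregated residuals `r_{ij} = (Σ_t ⟪ũ_j^t, v_i^t⟫)/(Σ_t ⟪ũ_j^t, ũ_j^t⟫)`, then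
`ũ i s` equals the local block of the centrally computed Gram-Schmidt vector
`gramSchmidt ℝ v i`. -/
theorem federated_gramSchmidt_eq_centralized (S k : ℕ) (n : Fin S → ℕ)
    (v : Fin k → EuclideanSpace ℝ ((s : Fin S) × Fin (n s)))
    (hv : LinearIndependent ℝ v)
    (u : Fin k → (s : Fin S) → EuclideanSpace ℝ (Fin (n s)))
    (hrec : ∀ (i : Fin k) (s : Fin S), u i s =
      localBlock (v i) s -
        ∑ j ∈ Finset.Iio i,
          ((∑ t : Fin S, ⟪u j t, localBlock (v i) t⟫) /
            (∑ t : Fin S, ⟪u j t, u j t⟫)) • u j s) :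
    ∀ (i : Fin k) (s : Fin S), u i s = localBlock (InnerProductSpace.gramSchmidt ℝ v i) s :=
  federated_gramSchmidt_eq_centralized_general S k n v u hrec
end

section
/- Centralized and federated Gram-Schmidt orthonormalization are equivalent: let v : Fin k → EuclideanSpace ℝ N be a linearly independent family of vectors indexed by the sigma type N = (s : Fin S) × Fin (n s), and suppose the families ũ_i^s satisfy the federated recursion ũ_i^s = v_i^s − Σ_{j < i} r_{ij} • ũ_j^s with aggregated residuals r_{ij} = (Σ_t ⟨ũ_j^t, v_i^t⟩) / (Σ_t ⟨ũ_j^t, ũ_j^t⟩), and let ñ_i := Σ_t ⟨ũ_i^t, ũ_i^t⟩ be the aggregated squared norms. Then for every i and s, the federated normalized vector (1/√ñ_i) • ũ_i^s equals the local block (gramSchmidtNormed ℝ v i)^s of the centrally computed orthonormalized Gram-Schmidt vector. -/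
/-!
Since every block `u^s` is a linear function of `u` and the inner product on the sigma type is
the sum of the blockwise inner products, the aggregated residuals `r_ij` are exactly the
centralized Gram-Schmidt coefficients `⟪u_j, v_i⟫ / ⟪u_j, u_j⟫`. Hence, by strong induction
on `i`, the federated vectors `ũ_i^s` are the blocks of the centralized `gramSchmidt ℝ v i`,
and the aggregated squared norm `ñ_i` is `‖gramSchmidt ℝ v i‖²`.
-/

open scoped RealInnerProductSpace

open Finset InnerProductSpace

section LocalBlock

variable {S : ℕ} {n : Fin S → ℕ}

lemma localBlock_sub (a b : EuclideanSpace ℝ ((s : Fin S) × Fin (n s))) (s : Fin S) :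
    localBlock (a - b) s = localBlock a s - localBlock b s := by
  ext j; simp [localBlock]

lemma localBlock_smul (c : ℝ) (a : EuclideanSpace ℝ ((s : Fin S) × Fin (n s))) (s : Fin S) :
    localBlock (c • a) s = c • localBlock a s := by
  ext j; simp [localBlock]

lemma localBlock_sum {ι : Type*} (T : Finset ι)
    (f : ι → EuclideanSpace ℝ ((s : Fin S) × Fin (n s))) (s : Fin S) :
    localBlock (∑ j ∈ T, f j) s = ∑ j ∈ T, localBlock (f j) s := by
  ext j; simp [localBlock, WithLp.ofLp_sum]

lemma sum_inner_localBlock (a b : EuclideanSpace ℝ ((s : Fin S) × Fin (n s))) :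
    ∑ t : Fin S, ⟪localBlock a t, localBlock b t⟫ = ⟪a, b⟫ := by
  simp only [PiLp.inner_apply, RCLike.inner_apply, starRingEnd_apply, star_trivial, localBlock]
  rw [← univ_sigma_univ, sum_sigma]

end LocalBlock

theorem InnerProductSpace.gramSchmidt_eq_sub_sum_inner_div_inner_self (𝕜 : Type*) {E : Type*}
    [RCLike 𝕜] [NormedAddCommGroup E] [InnerProductSpace 𝕜 E]
    {ι : Type*} [LinearOrder ι] [LocallyFiniteOrderBot ι] [WellFoundedLT ι]
    (f : ι → E) (i : ι) :
    gramSchmidt 𝕜 f i = f i - ∑ j ∈ Iio i,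
      (inner 𝕜 (gramSchmidt 𝕜 f j) (f i) / inner 𝕜 (gramSchmidt 𝕜 f j) (gramSchmidt 𝕜 f j)) •
        gramSchmidt 𝕜 f j := by
  simp only [gramSchmidt_def 𝕜 f i, Submodule.starProjection_singleton, inner_self_eq_norm_sq_to_K,
    RCLike.ofReal_pow]

theorem eq_localBlock_gramSchmidt_of_federated {S : ℕ} {n : Fin S → ℕ}
    {ι : Type*} [LinearOrder ι] [LocallyFiniteOrderBot ι] [WellFoundedLT ι]
    (v : ι → EuclideanSpace ℝ ((s : Fin S) × Fin (n s)))
    (u : ι → (s : Fin S) → EuclideanSpace ℝ (Fin (n s)))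
    (hrec : ∀ i s, u i s = localBlock (v i) s - ∑ j ∈ Iio i,
      ((∑ t, ⟪u j t, localBlock (v i) t⟫) / (∑ t, ⟪u j t, u j t⟫)) • u j s)
    (i : ι) :
    u i = fun s => localBlock (gramSchmidt ℝ v i) s := by
  induction i using WellFoundedLT.induction with
  | _ i ih =>
    funext s
    rw [hrec i s, gramSchmidt_eq_sub_sum_inner_div_inner_self, localBlock_sub, localBlock_sum]
    refine congrArg _ (sum_congr rfl fun j hj => ?_)
    rw [ih j (mem_Iio.mp hj), localBlock_smul]
    simp only [sum_inner_localBlock]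

theorem federated_gramSchmidt_normed_eq_centralized_general (S k : ℕ) (n : Fin S → ℕ)
    (v : Fin k → EuclideanSpace ℝ ((s : Fin S) × Fin (n s)))
    (u : Fin k → (s : Fin S) → EuclideanSpace ℝ (Fin (n s)))
    (hrec : ∀ (i : Fin k) (s : Fin S), u i s =
      localBlock (v i) s -
        ∑ j ∈ Finset.Iio i,
          ((∑ t : Fin S, ⟪u j t, localBlock (v i) t⟫) /
            (∑ t : Fin S, ⟪u j t, u j t⟫)) • u j s) :
    ∀ (i : Fin k) (s : Fin S),
      (1 / Real.sqrt (∑ t : Fin S, ⟪u i t, u i t⟫)) • u i s =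
        localBlock (InnerProductSpace.gramSchmidtNormed ℝ v i) s := by
  intro i s
  rw [eq_localBlock_gramSchmidt_of_federated v u hrec i, sum_inner_localBlock,
    real_inner_self_eq_norm_sq, Real.sqrt_sq (norm_nonneg _), gramSchmidtNormed, localBlock_smul,
    one_div]
  rfl

/-- Centralized and federated Gram-Schmidt orthonormalization are equivalent (Proposition 2):
if the local families `ũ i s` satisfy the federated recursion with aggregated residuals, and
`ñ_i = Σ_t ⟪ũ_i^t, ũ_i^t⟫` are the aggregated squared norms, then the federated normalized
vectors `(1/√ñ_i) • ũ_i^s` equal the local blocks of the centrally computed orthonormalized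
Gram-Schmidt vectors `gramSchmidtNormed ℝ v i`. -/
theorem federated_gramSchmidt_normed_eq_centralized (S k : ℕ) (n : Fin S → ℕ)
    (v : Fin k → EuclideanSpace ℝ ((s : Fin S) × Fin (n s)))
    (hv : LinearIndependent ℝ v)
    (u : Fin k → (s : Fin S) → EuclideanSpace ℝ (Fin (n s)))
    (hrec : ∀ (i : Fin k) (s : Fin S), u i s =
      localBlock (v i) s -
        ∑ j ∈ Finset.Iio i,
          ((∑ t : Fin S, ⟪u j t, localBlock (v i) t⟫) /
            (∑ t : Fin S, ⟪u j t, u j t⟫)) • u j s) :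
    ∀ (i : Fin k) (s : Fin S),
      (1 / Real.sqrt (∑ t : Fin S, ⟪u i t, u i t⟫)) • u i s =
        localBlock (InnerProductSpace.gramSchmidtNormed ℝ v i) s :=
  federated_gramSchmidt_normed_eq_centralized_general S k n v u hrec
end

section
/- Let A be an m×N real matrix with columns indexed by the sigma type N = (s : Fin S) × Fin (n s), and let P be a p×m real matrix (a shared projection). Then the aggregated reduced covariance matrix Σ_s (P * A^s) * (P * A^s)ᵀ, assembled from the proxy data matrices Â_s = P * A^s computed at the sites, equals the projected full covariance matrix P * (A * Aᵀ) * Pᵀ. -/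
open Matrix

/-- In federated randomized SVD (Algorithm 4), the aggregated reduced covariance matrix
`Σ_s (P * A^s) * (P * A^s)ᵀ`, assembled from the proxy data matrices `Â_s = P * A^s`
computed at the sites, equals the projected full covariance matrix `P * (A * Aᵀ) * Pᵀ`. -/
theorem federated_randomized_covariance (S m p : ℕ) (n : Fin S → ℕ)
    (A : Matrix (Fin m) ((s : Fin S) × Fin (n s)) ℝ)
    (P : Matrix (Fin p) (Fin m) ℝ) :
    ∑ s : Fin S,
        (P * A.submatrix id (Sigma.mk s)) * (P * A.submatrix id (Sigma.mk s))ᵀ =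
      P * (A * Aᵀ) * Pᵀ := by
  have key : ∑ s : Fin S,
      A.submatrix id (Sigma.mk s) * (A.submatrix id (Sigma.mk s))ᵀ = A * Aᵀ := by
    ext i j
    simp only [Matrix.sum_apply, mul_apply, transpose_apply, submatrix_apply, id_eq]
    rw [← Finset.univ_sigma_univ, Finset.sum_sigma]
  calc ∑ s : Fin S,
        (P * A.submatrix id (Sigma.mk s)) * (P * A.submatrix id (Sigma.mk s))ᵀ
      = ∑ s : Fin S,
        P * (A.submatrix id (Sigma.mk s) * (A.submatrix id (Sigma.mk s))ᵀ) * Pᵀ := by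
        simp [transpose_mul, Matrix.mul_assoc]
    _ = P * (∑ s : Fin S,
        A.submatrix id (Sigma.mk s) * (A.submatrix id (Sigma.mk s))ᵀ) * Pᵀ := by
        rw [Matrix.mul_sum, Matrix.sum_mul]
    _ = P * (A * Aᵀ) * Pᵀ := by rw [key]
end
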